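/- arXiv:hep-th/9412207 — 2 statements merged into one kernel-verified Lean document; each statement's English description precedes it below -/
import Mathlib

section
/- Tensor product of representations: if (W, L_W) and (W', L_{W'}) are representations of A(R), then W ⊗ W' with the sum 𝔥-action and L-operator L(z,λ) = L_W^{(12)}(z, λ+ηh^{(3)}) L_{W'}^{(13)}(z, λ−ηh^{(2)}) ∈ End(V ⊗ W ⊗ W') again satisfies the defining RLL relation and the weight-zero condition, hence is a representation of A(R). -/
/-!
On `V ⊗ V ⊗ W ⊗ W'` both sides of the RLL relation for the tensor `L`-operator factor into
`R^{(12)}`, `L^{(13)}`, `L'^{(14)}`, `L^{(23)}`, `L'^{(24)}`, each shifted dynamically by the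
weights of the two factors it does not act on. Commute `L'^{(14)}` past `L^{(23)}`, apply the
RLL relation of `L` with `W'` as a spectator (block diagonally over the weights of `W'`), then
that of `L'` with `W` as a spectator, and commute `L^{(13)}` back past `L'^{(24)}`.
The commutations hold although each operator is shifted by the weights of the other's
factors: weight zero means that the nonzero entries of an `L`-operator preserve total weight,
so the shift is the same whether read off the row or the column index. The same description
of weight zero gives the weight-zero condition for the product.
-/

open Matrix Filter Topology
open scoped BigOperators

noncomputable section

/- The Cartan subalgebra `𝔥` is identified with `ℂ^m = Fin m → ℂ` via an
orthonormal basis `(h_ν)`; a diagonalizable `𝔥`-module is a space `ℂ^ι`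
together with a weight function `wt : ι → (Fin m → ℂ)`; `λ ∈ 𝔥` acts on the
basis vector `i` by the scalar `⟨wt i, λ⟩ = Σ_ν (wt i) ν * λ ν`. -/

variable {m : ℕ}

/-- pairing `⟨μ, X⟩` of a weight with an element of `𝔥`. -/
def pairH (μ X : Fin m → ℂ) : ℂ := ∑ ν, μ ν * X ν

section Emb

variable {α β γ : Type*} [Fintype α] [Fintype β] [Fintype γ]
variable [DecidableEq α] [DecidableEq β] [DecidableEq γ]

/-- `F(λ + c h^{(3)})` acting on factors 1,2 of a triple tensor product:
`f(λ + c h^{(k)}) = Σ_μ P_μ^{(k)} f(λ + c μ)` via the weight projections. -/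
def emb12sh (wt : γ → (Fin m → ℂ)) (c : ℂ)
    (F : (Fin m → ℂ) → Matrix (α × β) (α × β) ℂ) (lam : Fin m → ℂ) :
    Matrix (α × β × γ) (α × β × γ) ℂ :=
  fun p q => F (lam + c • wt p.2.2) (p.1, p.2.1) (q.1, q.2.1) *
    (if p.2.2 = q.2.2 then 1 else 0)

/-- `F(λ + c h^{(2)})` acting on factors 1,3. -/
def emb13sh (wt : β → (Fin m → ℂ)) (c : ℂ)
    (F : (Fin m → ℂ) → Matrix (α × γ) (α × γ) ℂ) (lam : Fin m → ℂ) :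
    Matrix (α × β × γ) (α × β × γ) ℂ :=
  fun p q => F (lam + c • wt p.2.1) (p.1, p.2.2) (q.1, q.2.2) *
    (if p.2.1 = q.2.1 then 1 else 0)

/-- `F(λ + c h^{(1)})` acting on factors 2,3. -/
def emb23sh (wt : α → (Fin m → ℂ)) (c : ℂ)
    (F : (Fin m → ℂ) → Matrix (β × γ) (β × γ) ℂ) (lam : Fin m → ℂ) :
    Matrix (α × β × γ) (α × β × γ) ℂ :=
  fun p q => F (lam + c • wt p.1) (p.2.1, p.2.2) (q.2.1, q.2.2) *
    (if p.1 = q.1 then 1 else 0)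

/-- plain (unshifted) embedding into factors 1,2. -/
def emb12p (M : Matrix (α × β) (α × β) ℂ) : Matrix (α × β × γ) (α × β × γ) ℂ :=
  fun p q => M (p.1, p.2.1) (q.1, q.2.1) * (if p.2.2 = q.2.2 then 1 else 0)

/-- plain embedding into factors 1,3. -/
def emb13p (M : Matrix (α × γ) (α × γ) ℂ) : Matrix (α × β × γ) (α × β × γ) ℂ :=
  fun p q => M (p.1, p.2.2) (q.1, q.2.2) * (if p.2.1 = q.2.1 then 1 else 0)

/-- plain embedding into factors 2,3. -/
def emb23p (M : Matrix (β × γ) (β × γ) ℂ) : Matrix (α × β × γ) (α × β × γ) ℂ :=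
  fun p q => M (p.2.1, p.2.2) (q.2.1, q.2.2) * (if p.1 = q.1 then 1 else 0)

/-- weight-zero condition on a matrix on a two-fold tensor product:
`[X^{(1)} + X^{(2)}, F] = 0` for all `X ∈ 𝔥`. -/
def WeightZero2 (wtA : α → (Fin m → ℂ)) (wtB : β → (Fin m → ℂ))
    (F : Matrix (α × β) (α × β) ℂ) : Prop :=
  ∀ X : Fin m → ℂ,
    Matrix.diagonal (fun p : α × β => pairH (wtA p.1) X + pairH (wtB p.2) X) * F =
    F * Matrix.diagonal (fun p : α × β => pairH (wtA p.1) X + pairH (wtB p.2) X)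

end Emb

section RMat

variable {ι : Type*} [Fintype ι] [DecidableEq ι]

/-- the flip `P` of `V ⊗ V`. -/
def flipP : Matrix (ι × ι) (ι × ι) ℂ := fun p q => if p.1 = q.2 ∧ p.2 = q.1 then 1 else 0

/-- the modified (dynamical) Yang–Baxter equation
`R^{(12)}(z₁₂,λ+ηh^{(3)}) R^{(13)}(z₁₃,λ−ηh^{(2)}) R^{(23)}(z₂₃,λ+ηh^{(1)}) =
 R^{(23)}(z₂₃,λ−ηh^{(1)}) R^{(13)}(z₁₃,λ+ηh^{(2)}) R^{(12)}(z₁₂,λ−ηh^{(3)})`. -/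
def MYBE (wt : ι → (Fin m → ℂ)) (η : ℂ)
    (R : ℂ → (Fin m → ℂ) → Matrix (ι × ι) (ι × ι) ℂ) : Prop :=
  ∀ z₁ z₂ z₃ lam,
    emb12sh wt η (R (z₁ - z₂)) lam * emb13sh wt (-η) (R (z₁ - z₃)) lam *
        emb23sh wt η (R (z₂ - z₃)) lam =
      emb23sh wt (-η) (R (z₂ - z₃)) lam * emb13sh wt η (R (z₁ - z₃)) lam *
        emb12sh wt (-η) (R (z₁ - z₂)) lam

/-- unitarity `R^{(12)}(z,λ) R^{(21)}(−z,λ) = Id`. -/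
def RUnitary (R : ℂ → (Fin m → ℂ) → Matrix (ι × ι) (ι × ι) ℂ) : Prop :=
  ∀ z lam, R z lam * (flipP * R (-z) lam * flipP) = 1

/-- a generalized quantum R-matrix: a weight-zero unitary solution of the
modified Yang–Baxter equation. -/
def IsGenR (wt : ι → (Fin m → ℂ)) (η : ℂ)
    (R : ℂ → (Fin m → ℂ) → Matrix (ι × ι) (ι × ι) ℂ) : Prop :=
  MYBE wt η R ∧ RUnitary R ∧ ∀ z lam, WeightZero2 wt wt (R z lam)

end RMat

section Rep

variable {ι κ : Type*} [Fintype ι] [DecidableEq ι] [Fintype κ] [DecidableEq κ]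

/-- the RLL relation defining representations of the elliptic quantum group
`A(R)`:
`R^{(12)}(z₁₂,λ+ηh^{(3)}) L^{(13)}(z₁,λ−ηh^{(2)}) L^{(23)}(z₂,λ+ηh^{(1)}) =
 L^{(23)}(z₂,λ−ηh^{(1)}) L^{(13)}(z₁,λ+ηh^{(2)}) R^{(12)}(z₁₂,λ−ηh^{(3)})`
in `End(V ⊗ V ⊗ W)`. -/
def RLL (wt : ι → (Fin m → ℂ)) (wtW : κ → (Fin m → ℂ)) (η : ℂ)
    (R : ℂ → (Fin m → ℂ) → Matrix (ι × ι) (ι × ι) ℂ)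
    (L : ℂ → (Fin m → ℂ) → Matrix (ι × κ) (ι × κ) ℂ) : Prop :=
  ∀ z₁ z₂ lam,
    emb12sh wtW η (R (z₁ - z₂)) lam * emb13sh wt (-η) (L z₁) lam *
        emb23sh wt η (L z₂) lam =
      emb23sh wt (-η) (L z₂) lam * emb13sh wt η (L z₁) lam *
        emb12sh wtW (-η) (R (z₁ - z₂)) lam

/-- a representation of `A(R)`: a weight-zero `L`-operator satisfying `RLL`. -/
def IsRep (wt : ι → (Fin m → ℂ)) (wtW : κ → (Fin m → ℂ)) (η : ℂ)
    (R : ℂ → (Fin m → ℂ) → Matrix (ι × ι) (ι × ι) ℂ)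
    (L : ℂ → (Fin m → ℂ) → Matrix (ι × κ) (ι × κ) ℂ) : Prop :=
  RLL wt wtW η R L ∧ ∀ z lam, WeightZero2 wt wtW (L z lam)

end Rep

section Tensor

variable {ι κ κ' : Type*} [Fintype ι] [DecidableEq ι]
variable [Fintype κ] [DecidableEq κ] [Fintype κ'] [DecidableEq κ']

/-- the tensor-product (coproduct) `L`-operator
`L^{(12)}(z, λ+ηh^{(3)}) L'^{(13)}(z, λ−ηh^{(2)})` on `V ⊗ W ⊗ W'`. -/
def tensorL (wtW : κ → (Fin m → ℂ)) (wtW' : κ' → (Fin m → ℂ)) (η : ℂ)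
    (L : ℂ → (Fin m → ℂ) → Matrix (ι × κ) (ι × κ) ℂ)
    (L' : ℂ → (Fin m → ℂ) → Matrix (ι × κ') (ι × κ') ℂ) :
    ℂ → (Fin m → ℂ) → Matrix (ι × κ × κ') (ι × κ × κ') ℂ :=
  fun z lam => emb12sh wtW' η (L z) lam * emb13sh wtW (-η) (L' z) lam

end Tensor

section Weight

variable {n X : Type*}

def PreservesWeight (w : n → X) (M : Matrix n n ℂ) : Prop :=
  ∀ p q, M p q ≠ 0 → w p = w q

theorem PreservesWeight.mul [Fintype n] {w : n → X} {M N : Matrix n n ℂ}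
    (hM : PreservesWeight w M) (hN : PreservesWeight w N) : PreservesWeight w (M * N) := by
  intro p q h
  obtain ⟨r, -, hr⟩ := Finset.exists_ne_zero_of_sum_ne_zero h
  exact (hM p r (left_ne_zero_of_mul hr)).trans (hN r q (right_ne_zero_of_mul hr))

theorem PreservesWeight.mul_comp_weight {w : n → X} {M : Matrix n n ℂ}
    (hM : PreservesWeight w M) (x y : n) (g : X → ℂ) :
    M x y * g (w x) = M x y * g (w y) := by
  by_cases h : M x y = 0
  · simp [h]
  · rw [hM x y h]

end Weight

theorem pairH_add (μ ν X : Fin m → ℂ) : pairH (μ + ν) X = pairH μ X + pairH ν X := by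
  simp [pairH, add_mul, Finset.sum_add_distrib]

theorem pairH_single (μ : Fin m → ℂ) (ν : Fin m) : pairH μ (Pi.single ν 1) = μ ν := by
  simp [pairH, Pi.single_apply]

section Embeddings

variable {α β γ δ : Type*}
variable (wα : α → Fin m → ℂ) (wβ : β → Fin m → ℂ) (wγ : γ → Fin m → ℂ) (wδ : δ → Fin m → ℂ)

theorem weightZero2_iff [Fintype α] [Fintype β] [DecidableEq α] [DecidableEq β]
    (F : Matrix (α × β) (α × β) ℂ) :
    WeightZero2 wα wβ F ↔ PreservesWeight (fun p : α × β => wα p.1 + wβ p.2) F := by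
  constructor
  · intro h p q hF
    funext ν
    have h2 := congrFun (congrFun (h (Pi.single ν 1)) p) q
    rw [diagonal_mul, mul_diagonal] at h2
    simp only [pairH_single] at h2
    simpa using mul_right_cancel₀ hF (h2.trans (mul_comm _ _))
  · intro h X
    ext p q
    rw [diagonal_mul, mul_diagonal]
    by_cases hF : F p q = 0
    · simp [hF]
    · have hweight := congrArg (pairH · X) (h p q hF)
      simp only [pairH_add] at hweight
      rw [hweight, mul_comm]

theorem preservesWeight_emb12sh [DecidableEq γ] (c : ℂ)
    (F : (Fin m → ℂ) → Matrix (α × β) (α × β) ℂ)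
    (hF : ∀ lam, PreservesWeight (fun p : α × β => wα p.1 + wβ p.2) (F lam))
    (lam : Fin m → ℂ) :
    PreservesWeight (fun p : α × β × γ => wα p.1 + (wβ p.2.1 + wγ p.2.2))
      (emb12sh wγ c F lam) := by
  rintro ⟨p₁, p₂, p₃⟩ ⟨q₁, q₂, q₃⟩ h
  obtain ⟨hF₀, hδ⟩ := mul_ne_zero_iff.mp h
  obtain rfl : p₃ = q₃ := by by_contra hne; simp [hne] at hδ
  have := hF _ (p₁, p₂) (q₁, q₂) hF₀
  dsimp only at this ⊢
  rw [← add_assoc, this, add_assoc]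

theorem preservesWeight_emb13sh [DecidableEq β] (c : ℂ)
    (F : (Fin m → ℂ) → Matrix (α × γ) (α × γ) ℂ)
    (hF : ∀ lam, PreservesWeight (fun p : α × γ => wα p.1 + wγ p.2) (F lam))
    (lam : Fin m → ℂ) :
    PreservesWeight (fun p : α × β × γ => wα p.1 + (wβ p.2.1 + wγ p.2.2))
      (emb13sh wβ c F lam) := by
  rintro ⟨p₁, p₂, p₃⟩ ⟨q₁, q₂, q₃⟩ h
  obtain ⟨hF₀, hδ⟩ := mul_ne_zero_iff.mp h
  obtain rfl : p₂ = q₂ := by by_contra hne; simp [hne] at hδ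
  have := hF _ (p₁, p₃) (q₁, q₃) hF₀
  dsimp only at this ⊢
  rw [add_left_comm, this, add_left_comm]

section Definitions

variable [DecidableEq α] [DecidableEq β] [DecidableEq γ] [DecidableEq δ]

/- `embIJsh4 w w' c c' F λ` is `F^{(IJ)}(λ + c h^{(k)} + c' h^{(l)})` on a fourfold tensor
product, where `k < l` are the two factors other than `I, J` and `w, w'` their weights. -/

def emb12sh4 (c₃ c₄ : ℂ) (F : (Fin m → ℂ) → Matrix (α × β) (α × β) ℂ) (lam : Fin m → ℂ) :
    Matrix (α × β × γ × δ) (α × β × γ × δ) ℂ :=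
  fun p q => F (lam + c₃ • wγ p.2.2.1 + c₄ • wδ p.2.2.2) (p.1, p.2.1) (q.1, q.2.1) *
    (if p.2.2.1 = q.2.2.1 then 1 else 0) * (if p.2.2.2 = q.2.2.2 then 1 else 0)

def emb13sh4 (c₂ c₄ : ℂ) (F : (Fin m → ℂ) → Matrix (α × γ) (α × γ) ℂ) (lam : Fin m → ℂ) :
    Matrix (α × β × γ × δ) (α × β × γ × δ) ℂ :=
  fun p q => F (lam + c₂ • wβ p.2.1 + c₄ • wδ p.2.2.2) (p.1, p.2.2.1) (q.1, q.2.2.1) *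
    (if p.2.1 = q.2.1 then 1 else 0) * (if p.2.2.2 = q.2.2.2 then 1 else 0)

def emb14sh4 (c₂ c₃ : ℂ) (F : (Fin m → ℂ) → Matrix (α × δ) (α × δ) ℂ) (lam : Fin m → ℂ) :
    Matrix (α × β × γ × δ) (α × β × γ × δ) ℂ :=
  fun p q => F (lam + c₂ • wβ p.2.1 + c₃ • wγ p.2.2.1) (p.1, p.2.2.2) (q.1, q.2.2.2) *
    (if p.2.1 = q.2.1 then 1 else 0) * (if p.2.2.1 = q.2.2.1 then 1 else 0)

def emb23sh4 (c₁ c₄ : ℂ) (F : (Fin m → ℂ) → Matrix (β × γ) (β × γ) ℂ) (lam : Fin m → ℂ) :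
    Matrix (α × β × γ × δ) (α × β × γ × δ) ℂ :=
  fun p q => F (lam + c₁ • wα p.1 + c₄ • wδ p.2.2.2) (p.2.1, p.2.2.1) (q.2.1, q.2.2.1) *
    (if p.1 = q.1 then 1 else 0) * (if p.2.2.2 = q.2.2.2 then 1 else 0)

def emb24sh4 (c₁ c₃ : ℂ) (F : (Fin m → ℂ) → Matrix (β × δ) (β × δ) ℂ) (lam : Fin m → ℂ) :
    Matrix (α × β × γ × δ) (α × β × γ × δ) ℂ :=
  fun p q => F (lam + c₁ • wα p.1 + c₃ • wγ p.2.2.1) (p.2.1, p.2.2.2) (q.2.1, q.2.2.2) *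
    (if p.1 = q.1 then 1 else 0) * (if p.2.2.1 = q.2.2.1 then 1 else 0)

end Definitions

def prodReassoc4 : α × β × γ × δ ≃ (α × β × γ) × δ where
  toFun p := ((p.1, p.2.1, p.2.2.1), p.2.2.2)
  invFun p := (p.1.1, p.1.2.1, p.1.2.2, p.2)
  left_inv _ := rfl
  right_inv _ := rfl

def prodReassoc3 : α × β × γ × δ ≃ (α × β × δ) × γ where
  toFun p := ((p.1, p.2.1, p.2.2.2), p.2.2.1)
  invFun p := (p.1.1, p.1.2.1, p.2, p.1.2.2)
  left_inv _ := rfl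
  right_inv _ := rfl

/-- The operator acting on the first three factors as `M k` when the fourth one is `k`. -/
def spectator4 [DecidableEq δ] (M : δ → Matrix (α × β × γ) (α × β × γ) ℂ) :
    Matrix (α × β × γ × δ) (α × β × γ × δ) ℂ :=
  (blockDiagonal M).submatrix prodReassoc4 prodReassoc4

def spectator3 [DecidableEq γ] (M : γ → Matrix (α × β × δ) (α × β × δ) ℂ) :
    Matrix (α × β × γ × δ) (α × β × γ × δ) ℂ :=
  (blockDiagonal M).submatrix prodReassoc3 prodReassoc3

theorem spectator4_mul [Fintype α] [Fintype β] [Fintype γ] [Fintype δ] [DecidableEq δ]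
    (M N : δ → Matrix (α × β × γ) (α × β × γ) ℂ) :
    spectator4 M * spectator4 N = spectator4 fun k => M k * N k := by
  rw [spectator4, spectator4, submatrix_mul_equiv, ← blockDiagonal_mul, spectator4]

theorem spectator3_mul [Fintype α] [Fintype β] [Fintype γ] [Fintype δ] [DecidableEq γ]
    (M N : γ → Matrix (α × β × δ) (α × β × δ) ℂ) :
    spectator3 M * spectator3 N = spectator3 fun k => M k * N k := by
  rw [spectator3, spectator3, submatrix_mul_equiv, ← blockDiagonal_mul, spectator3]

section Spectator

variable (c c' : ℂ) (lam : Fin m → ℂ)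

theorem emb12sh4_eq_spectator4 [DecidableEq γ] [DecidableEq δ]
    (F : (Fin m → ℂ) → Matrix (α × β) (α × β) ℂ) :
    emb12sh4 wγ wδ c c' F lam = spectator4 fun k => emb12sh wγ c F (lam + c' • wδ k) := by
  ext p q
  simp [emb12sh4, spectator4, prodReassoc4, blockDiagonal_apply, emb12sh, add_right_comm]

theorem emb13sh4_eq_spectator4 [DecidableEq β] [DecidableEq δ]
    (F : (Fin m → ℂ) → Matrix (α × γ) (α × γ) ℂ) :
    emb13sh4 wβ wδ c c' F lam = spectator4 fun k => emb13sh wβ c F (lam + c' • wδ k) := by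
  ext p q
  simp [emb13sh4, spectator4, prodReassoc4, blockDiagonal_apply, emb13sh, add_right_comm]

theorem emb23sh4_eq_spectator4 [DecidableEq α] [DecidableEq δ]
    (F : (Fin m → ℂ) → Matrix (β × γ) (β × γ) ℂ) :
    emb23sh4 wα wδ c c' F lam = spectator4 fun k => emb23sh wα c F (lam + c' • wδ k) := by
  ext p q
  simp [emb23sh4, spectator4, prodReassoc4, blockDiagonal_apply, emb23sh, add_right_comm]

theorem emb12sh4_eq_spectator3 [DecidableEq γ] [DecidableEq δ]
    (F : (Fin m → ℂ) → Matrix (α × β) (α × β) ℂ) :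
    emb12sh4 wγ wδ c c' F lam = spectator3 fun k => emb12sh wδ c' F (lam + c • wγ k) := by
  ext p q
  simp [emb12sh4, spectator3, prodReassoc3, blockDiagonal_apply, emb12sh, ← ite_and, and_comm]

theorem emb14sh4_eq_spectator3 [DecidableEq β] [DecidableEq γ]
    (F : (Fin m → ℂ) → Matrix (α × δ) (α × δ) ℂ) :
    emb14sh4 wβ wγ c c' F lam = spectator3 fun k => emb13sh wβ c F (lam + c' • wγ k) := by
  ext p q
  simp [emb14sh4, spectator3, prodReassoc3, blockDiagonal_apply, emb13sh, add_right_comm]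

theorem emb24sh4_eq_spectator3 [DecidableEq α] [DecidableEq γ]
    (F : (Fin m → ℂ) → Matrix (β × δ) (β × δ) ℂ) :
    emb24sh4 wα wγ c c' F lam = spectator3 fun k => emb23sh wα c F (lam + c' • wγ k) := by
  ext p q
  simp [emb24sh4, spectator3, prodReassoc3, blockDiagonal_apply, emb23sh, add_right_comm]

end Spectator

section Commute

variable [Fintype α] [Fintype β] [Fintype γ] [Fintype δ]
variable [DecidableEq α] [DecidableEq β] [DecidableEq γ] [DecidableEq δ] (c c' : ℂ)

theorem commute_emb14sh4_emb23sh4 (G : (Fin m → ℂ) → Matrix (α × δ) (α × δ) ℂ)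
    (H : (Fin m → ℂ) → Matrix (β × γ) (β × γ) ℂ)
    (hG : ∀ lam, PreservesWeight (fun p : α × δ => wα p.1 + wδ p.2) (G lam))
    (hH : ∀ lam, PreservesWeight (fun p : β × γ => wβ p.1 + wγ p.2) (H lam))
    (lam : Fin m → ℂ) :
    Commute (emb14sh4 wβ wγ c c G lam) (emb23sh4 wα wδ c' c' H lam) := by
  ext ⟨p₁, p₂, p₃, p₄⟩ ⟨q₁, q₂, q₃, q₄⟩
  simp only [emb14sh4, emb23sh4, mul_apply, Fintype.sum_prod_type]
  simp only [mul_ite, ite_mul, mul_one, mul_zero, zero_mul, Finset.sum_ite_irrel,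
    Finset.sum_const_zero, Finset.sum_ite_eq, Finset.sum_ite_eq', Finset.mem_univ, if_true,
    add_assoc, ← smul_add]
  have hG' := (hG (lam + c • (wβ p₂ + wγ p₃))).mul_comp_weight (p₁, p₄) (q₁, q₄)
    fun v => H (lam + c' • v) (p₂, p₃) (q₂, q₃)
  have hH' := (hH (lam + c' • (wα p₁ + wδ p₄))).mul_comp_weight (p₂, p₃) (q₂, q₃)
    fun v => G (lam + c • v) (p₁, p₄) (q₁, q₄)
  rw [← hG', ← hH', mul_comm]

theorem commute_emb13sh4_emb24sh4 (G : (Fin m → ℂ) → Matrix (α × γ) (α × γ) ℂ)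
    (H : (Fin m → ℂ) → Matrix (β × δ) (β × δ) ℂ)
    (hG : ∀ lam, PreservesWeight (fun p : α × γ => wα p.1 + wγ p.2) (G lam))
    (hH : ∀ lam, PreservesWeight (fun p : β × δ => wβ p.1 + wδ p.2) (H lam))
    (lam : Fin m → ℂ) :
    Commute (emb13sh4 wβ wδ c c G lam) (emb24sh4 wα wγ c' c' H lam) := by
  ext ⟨p₁, p₂, p₃, p₄⟩ ⟨q₁, q₂, q₃, q₄⟩
  simp only [emb13sh4, emb24sh4, mul_apply, Fintype.sum_prod_type]
  simp only [mul_ite, ite_mul, mul_one, mul_zero, zero_mul, Finset.sum_ite_irrel,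
    Finset.sum_const_zero, Finset.sum_ite_eq, Finset.sum_ite_eq', Finset.mem_univ, if_true,
    add_assoc, ← smul_add]
  have hG' := (hG (lam + c • (wβ p₂ + wδ p₄))).mul_comp_weight (p₁, p₃) (q₁, q₃)
    fun v => H (lam + c' • v) (p₂, p₄) (q₂, q₄)
  have hH' := (hH (lam + c' • (wα p₁ + wγ p₃))).mul_comp_weight (p₂, p₄) (q₂, q₄)
    fun v => G (lam + c • v) (p₁, p₃) (q₁, q₃)
  rw [← hG', ← hH', mul_comm]

end Commute

section Lifts

variable [Fintype α] [Fintype γ] [Fintype δ] [DecidableEq α] [DecidableEq γ] [DecidableEq δ]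
variable (η : ℂ) (R : ℂ → (Fin m → ℂ) → Matrix (α × α) (α × α) ℂ)

theorem rll_spectator4 (L : ℂ → (Fin m → ℂ) → Matrix (α × γ) (α × γ) ℂ)
    (hL : RLL wα wγ η R L) (z₁ z₂ : ℂ) (lam : Fin m → ℂ) :
    emb12sh4 wγ wδ η η (R (z₁ - z₂)) lam * emb13sh4 wα wδ (-η) η (L z₁) lam *
        emb23sh4 wα wδ η η (L z₂) lam =
      emb23sh4 wα wδ (-η) η (L z₂) lam * emb13sh4 wα wδ η η (L z₁) lam *
        emb12sh4 wγ wδ (-η) η (R (z₁ - z₂)) lam := by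
  simp only [emb12sh4_eq_spectator4, emb13sh4_eq_spectator4, emb23sh4_eq_spectator4,
    spectator4_mul]
  exact congrArg spectator4 (funext fun k => hL z₁ z₂ (lam + η • wδ k))

theorem rll_spectator3 (L : ℂ → (Fin m → ℂ) → Matrix (α × δ) (α × δ) ℂ)
    (hL : RLL wα wδ η R L) (z₁ z₂ : ℂ) (lam : Fin m → ℂ) :
    emb12sh4 wγ wδ (-η) η (R (z₁ - z₂)) lam * emb14sh4 wα wγ (-η) (-η) (L z₁) lam *
        emb24sh4 wα wγ η (-η) (L z₂) lam =
      emb24sh4 wα wγ (-η) (-η) (L z₂) lam * emb14sh4 wα wγ η (-η) (L z₁) lam *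
        emb12sh4 wγ wδ (-η) (-η) (R (z₁ - z₂)) lam := by
  simp only [emb12sh4_eq_spectator3, emb14sh4_eq_spectator3, emb24sh4_eq_spectator3,
    spectator3_mul]
  exact congrArg spectator3 (funext fun k => hL z₁ z₂ (lam + (-η) • wγ k))

end Lifts

section Tensor

variable [DecidableEq γ] [DecidableEq δ] (c η : ℂ) (lam : Fin m → ℂ)

theorem emb12sh_prod_eq_emb12sh4 (F : (Fin m → ℂ) → Matrix (α × β) (α × β) ℂ) :
    emb12sh (fun p : γ × δ => wγ p.1 + wδ p.2) c F lam = emb12sh4 wγ wδ c c F lam := by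
  ext ⟨p₁, p₂, p₃, p₄⟩ ⟨q₁, q₂, q₃, q₄⟩
  by_cases h₃ : p₃ = q₃ <;> by_cases h₄ : p₄ = q₄ <;>
    simp [emb12sh, emb12sh4, smul_add, add_assoc, h₃, h₄]

variable [Fintype α] [Fintype γ] [Fintype δ]

theorem emb13sh_tensorL [Fintype β] [DecidableEq β] (L : ℂ → (Fin m → ℂ) → Matrix (α × γ) (α × γ) ℂ)
    (L' : ℂ → (Fin m → ℂ) → Matrix (α × δ) (α × δ) ℂ) (z : ℂ) :
    emb13sh wβ c (tensorL wγ wδ η L L' z) lam =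
      emb13sh4 wβ wδ c η (L z) lam * emb14sh4 wβ wγ c (-η) (L' z) lam := by
  ext ⟨p₁, p₂, p₃, p₄⟩ ⟨q₁, q₂, q₃, q₄⟩
  simp only [emb13sh, tensorL, emb12sh, emb13sh4, emb14sh4, mul_apply, Fintype.sum_prod_type]
  simp only [mul_ite, ite_mul, mul_one, mul_zero, zero_mul, Finset.sum_ite_irrel,
    Finset.sum_const_zero, Finset.sum_ite_eq, Finset.sum_ite_eq', Finset.mem_univ, if_true]
  by_cases h₂ : p₂ = q₂ <;> simp [h₂]

theorem emb23sh_tensorL [Fintype β] [DecidableEq α] [DecidableEq β]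
    (L : ℂ → (Fin m → ℂ) → Matrix (β × γ) (β × γ) ℂ)
    (L' : ℂ → (Fin m → ℂ) → Matrix (β × δ) (β × δ) ℂ) (z : ℂ) :
    emb23sh wα c (tensorL wγ wδ η L L' z) lam =
      emb23sh4 wα wδ c η (L z) lam * emb24sh4 wα wγ c (-η) (L' z) lam := by
  ext ⟨p₁, p₂, p₃, p₄⟩ ⟨q₁, q₂, q₃, q₄⟩
  simp only [emb23sh, tensorL, emb12sh, emb13sh, emb23sh4, emb24sh4, mul_apply,
    Fintype.sum_prod_type]
  simp only [mul_ite, ite_mul, mul_one, mul_zero, zero_mul, Finset.sum_ite_irrel,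
    Finset.sum_const_zero, Finset.sum_ite_eq, Finset.sum_ite_eq', Finset.mem_univ, if_true]
  by_cases h₁ : p₁ = q₁ <;> simp [h₁]

end Tensor

end Embeddings

section TensorProduct

variable {ι κ κ' : Type*} [Fintype ι] [DecidableEq ι]
variable [Fintype κ] [DecidableEq κ] [Fintype κ'] [DecidableEq κ']
variable (wt : ι → Fin m → ℂ) (wtW : κ → Fin m → ℂ) (wtW' : κ' → Fin m → ℂ) (η : ℂ)
variable (L : ℂ → (Fin m → ℂ) → Matrix (ι × κ) (ι × κ) ℂ)
variable (L' : ℂ → (Fin m → ℂ) → Matrix (ι × κ') (ι × κ') ℂ)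

theorem weightZero2_tensorL
    (hL : ∀ z lam, WeightZero2 wt wtW (L z lam)) (hL' : ∀ z lam, WeightZero2 wt wtW' (L' z lam))
    (z : ℂ) (lam : Fin m → ℂ) :
    WeightZero2 wt (fun p : κ × κ' => wtW p.1 + wtW' p.2) (tensorL wtW wtW' η L L' z lam) := by
  rw [weightZero2_iff]
  exact (preservesWeight_emb12sh wt wtW wtW' η (L z)
    (fun lam => (weightZero2_iff _ _ _).mp (hL z lam)) lam).mul
    (preservesWeight_emb13sh wt wtW wtW' (-η) (L' z)
      (fun lam => (weightZero2_iff _ _ _).mp (hL' z lam)) lam)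

theorem rll_tensorL (R : ℂ → (Fin m → ℂ) → Matrix (ι × ι) (ι × ι) ℂ)
    (hL : IsRep wt wtW η R L) (hL' : IsRep wt wtW' η R L') :
    RLL wt (fun p : κ × κ' => wtW p.1 + wtW' p.2) η R (tensorL wtW wtW' η L L') := by
  have hLw z lam := (weightZero2_iff wt wtW (L z lam)).mp (hL.2 z lam)
  have hL'w z lam := (weightZero2_iff wt wtW' (L' z lam)).mp (hL'.2 z lam)
  intro z₁ z₂ lam
  rw [emb12sh_prod_eq_emb12sh4, emb13sh_tensorL, emb23sh_tensorL, emb23sh_tensorL,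
    emb13sh_tensorL, emb12sh_prod_eq_emb12sh4]
  set a := emb12sh4 wtW wtW' η η (R (z₁ - z₂)) lam
  set b := emb13sh4 wt wtW' (-η) η (L z₁) lam
  set c := emb14sh4 wt wtW (-η) (-η) (L' z₁) lam
  set d := emb23sh4 wt wtW' η η (L z₂) lam
  set e := emb24sh4 wt wtW η (-η) (L' z₂) lam
  set d₂ := emb23sh4 wt wtW' (-η) η (L z₂) lam
  set b₂ := emb13sh4 wt wtW' η η (L z₁) lam
  set a₂ := emb12sh4 wtW wtW' (-η) η (R (z₁ - z₂)) lam
  set e₂ := emb24sh4 wt wtW (-η) (-η) (L' z₂) lam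
  set c₂ := emb14sh4 wt wtW η (-η) (L' z₁) lam
  set a₃ := emb12sh4 wtW wtW' (-η) (-η) (R (z₁ - z₂)) lam
  have hcd : c * d = d * c :=
    (commute_emb14sh4_emb23sh4 wt wt wtW wtW' (-η) η (L' z₁) (L z₂) (hL'w z₁) (hLw z₂) lam).eq
  have habd : a * b * d = d₂ * b₂ * a₂ := rll_spectator4 wt wtW wtW' η R L hL.1 z₁ z₂ lam
  have hace : a₂ * c * e = e₂ * c₂ * a₃ := rll_spectator3 wt wtW wtW' η R L' hL'.1 z₁ z₂ lam
  have hbe : b₂ * e₂ = e₂ * b₂ :=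
    (commute_emb13sh4_emb24sh4 wt wt wtW wtW' η (-η) (L z₁) (L' z₂) (hLw z₁) (hL'w z₂) lam).eq
  calc a * (b * c) * (d * e)
      = a * b * (c * d) * e := by simp only [mul_assoc]
    _ = a * b * d * (c * e) := by rw [hcd]; simp only [mul_assoc]
    _ = d₂ * b₂ * (a₂ * c * e) := by rw [habd]; simp only [mul_assoc]
    _ = d₂ * (b₂ * e₂) * (c₂ * a₃) := by rw [hace]; simp only [mul_assoc]
    _ = d₂ * e₂ * (b₂ * c₂) * a₃ := by rw [hbe]; simp only [mul_assoc]

end TensorProduct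

theorem tensor_product_representation_general
    {ι κ κ' : Type*} [Fintype ι] [DecidableEq ι]
    [Fintype κ] [DecidableEq κ] [Fintype κ'] [DecidableEq κ']
    (wt : ι → (Fin m → ℂ)) (wtW : κ → (Fin m → ℂ)) (wtW' : κ' → (Fin m → ℂ))
    (η : ℂ) (R : ℂ → (Fin m → ℂ) → Matrix (ι × ι) (ι × ι) ℂ)
    (L : ℂ → (Fin m → ℂ) → Matrix (ι × κ) (ι × κ) ℂ)
    (L' : ℂ → (Fin m → ℂ) → Matrix (ι × κ') (ι × κ') ℂ)
    (hL : IsRep wt wtW η R L) (hL' : IsRep wt wtW' η R L') :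
    IsRep wt (fun p : κ × κ' => wtW p.1 + wtW' p.2) η R
      (tensorL wtW wtW' η L L') :=
  ⟨rll_tensorL wt wtW wtW' η L L' R hL hL', weightZero2_tensorL wt wtW wtW' η L L' hL.2 hL'.2⟩

/-- the tensor product of two representations of `A(R)`,
with the sum `𝔥`-action and `L`-operator
`L^{(12)}(z,λ+ηh^{(3)}) L'^{(13)}(z,λ−ηh^{(2)})`, is again a representation
of `A(R)`. -/
theorem tensor_product_representation
    {ι κ κ' : Type*} [Fintype ι] [DecidableEq ι]
    [Fintype κ] [DecidableEq κ] [Fintype κ'] [DecidableEq κ']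
    (wt : ι → (Fin m → ℂ)) (wtW : κ → (Fin m → ℂ)) (wtW' : κ' → (Fin m → ℂ))
    (η : ℂ) (R : ℂ → (Fin m → ℂ) → Matrix (ι × ι) (ι × ι) ℂ)
    (hR : IsGenR wt η R)
    (L : ℂ → (Fin m → ℂ) → Matrix (ι × κ) (ι × κ) ℂ)
    (L' : ℂ → (Fin m → ℂ) → Matrix (ι × κ') (ι × κ') ℂ)
    (hL : IsRep wt wtW η R L) (hL' : IsRep wt wtW' η R L') :
    IsRep wt (fun p : κ × κ' => wtW p.1 + wtW' p.2) η R
      (tensorL wtW wtW' η L L') :=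
  tensor_product_representation_general wt wtW wtW' η R L L' hL hL'
end
end

section
/- If R ∈ End(V ⊗ V) is a generalized quantum R-matrix (weight-zero, unitary, solving the modified Yang–Baxter equation), then the face weights W(a,b,c,d,z) = (E[c−b]⊗E[b−a]) R(z, ηa+ηc)|_{V[d−a]⊗V[c−d]} satisfy the star-triangle relation Σ_g W(b,c,d,g,z₁₂)^{(12)} W(a,b,g,f,z₁₃)^{(13)} W(f,g,d,e,z₂₃)^{(23)} = Σ_g W(a,b,c,g,z₂₃)^{(23)} W(g,c,d,e,z₁₃)^{(13)} W(a,g,e,f,z₁₂)^{(12)} on V[f−a] ⊗ V[e−f] ⊗ V[d−e]. -/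
open Matrix Filter Topology
open scoped BigOperators

noncomputable section

/- The Cartan subalgebra `𝔥` is identified with `ℂ^m = Fin m → ℂ` via an
orthonormal basis `(h_ν)`; a diagonalizable `𝔥`-module is a space `ℂ^ι`
together with a weight function `wt : ι → (Fin m → ℂ)`; `λ ∈ 𝔥` acts on the
basis vector `i` by the scalar `⟨wt i, λ⟩ = Σ_ν (wt i) ν * λ ν`. -/

variable {m : ℕ}

section Face

variable {ι : Type*} [Fintype ι] [DecidableEq ι]

/-- the projection `E[μ] ⊗ E[ν]` onto `V[μ] ⊗ V[ν]` inside `V ⊗ V`. -/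
def projK (wt : ι → (Fin m → ℂ)) (μ ν : Fin m → ℂ) :
    Matrix (ι × ι) (ι × ι) ℂ :=
  Matrix.diagonal (fun p =>
    (if wt p.1 = μ then 1 else 0) * (if wt p.2 = ν then 1 else 0))

/-- the face (Boltzmann) weight
`W(a,b,c,d,z,λ) = (E[c−b]⊗E[b−a]) R(z, λ+ηa+ηc)|_{V[d−a]⊗V[c−d]}`. -/
def face (wt : ι → (Fin m → ℂ)) (η : ℂ)
    (R : ℂ → (Fin m → ℂ) → Matrix (ι × ι) (ι × ι) ℂ)
    (a b c d : Fin m → ℂ) (z : ℂ) (lam : Fin m → ℂ) :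
    Matrix (ι × ι) (ι × ι) ℂ :=
  projK wt (c - b) (b - a) * R z (lam + η • a + η • c) * projK wt (d - a) (c - d)

/-- the face weight at `λ = 0`: `W(a,b,c,d,z) = W(a,b,c,d,z,0)`. -/
def face0 (wt : ι → (Fin m → ℂ)) (η : ℂ)
    (R : ℂ → (Fin m → ℂ) → Matrix (ι × ι) (ι × ι) ℂ)
    (a b c d : Fin m → ℂ) (z : ℂ) : Matrix (ι × ι) (ι × ι) ℂ :=
  face wt η R a b c d z 0

end Face

section Embeddings

variable {α β γ : Type*} [Fintype α] [Fintype β] [Fintype γ]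
  [DecidableEq α] [DecidableEq β] [DecidableEq γ]

theorem WeightZero2.apply_eq_zero {wtA : α → Fin m → ℂ} {wtB : β → Fin m → ℂ}
    {F : Matrix (α × β) (α × β) ℂ} (h : WeightZero2 wtA wtB F) {p q : α × β}
    (hpq : wtA p.1 + wtB p.2 ≠ wtA q.1 + wtB q.2) : F p q = 0 := by
  obtain ⟨ν, hν⟩ := Function.ne_iff.mp hpq
  have hcomm := congrFun (congrFun (h (Pi.single ν 1)) p) q
  simp only [diagonal_mul, mul_diagonal, pairH_single] at hcomm
  have : ((wtA p.1 + wtB p.2) ν - (wtA q.1 + wtB q.2) ν) * F p q = 0 := by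
    simp only [Pi.add_apply]
    linear_combination hcomm
  exact (mul_eq_zero.mp this).resolve_left (sub_ne_zero.mpr hν)

theorem emb12sh_mul_emb13sh_mul_emb23sh_apply (wtA : α → Fin m → ℂ) (wtB : β → Fin m → ℂ)
    (wtC : γ → Fin m → ℂ) (c₁ c₂ c₃ : ℂ) (F : (Fin m → ℂ) → Matrix (α × β) (α × β) ℂ)
    (G : (Fin m → ℂ) → Matrix (α × γ) (α × γ) ℂ) (H : (Fin m → ℂ) → Matrix (β × γ) (β × γ) ℂ)
    (lam : Fin m → ℂ) (p q : α × β × γ) :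
    (emb12sh wtC c₁ F lam * emb13sh wtB c₂ G lam * emb23sh wtA c₃ H lam) p q =
      ∑ x, ∑ y, ∑ w, F (lam + c₁ • wtC p.2.2) (p.1, p.2.1) (x, y) *
        G (lam + c₂ • wtB y) (x, p.2.2) (q.1, w) *
        H (lam + c₃ • wtA q.1) (y, w) (q.2.1, q.2.2) := by
  simp only [mul_apply, emb12sh, emb13sh, emb23sh, Fintype.sum_prod_type, mul_ite, mul_one,
    mul_zero, ite_mul, zero_mul, Finset.sum_ite_eq, Finset.sum_ite_eq', Finset.mem_univ,
    if_true, Finset.sum_mul, Finset.sum_ite_irrel, Finset.sum_const_zero]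
  exact (Finset.sum_congr rfl fun _ _ => Finset.sum_comm).trans Finset.sum_comm

theorem emb23sh_mul_emb13sh_mul_emb12sh_apply (wtA : α → Fin m → ℂ) (wtB : β → Fin m → ℂ)
    (wtC : γ → Fin m → ℂ) (c₁ c₂ c₃ : ℂ) (H : (Fin m → ℂ) → Matrix (β × γ) (β × γ) ℂ)
    (G : (Fin m → ℂ) → Matrix (α × γ) (α × γ) ℂ) (F : (Fin m → ℂ) → Matrix (α × β) (α × β) ℂ)
    (lam : Fin m → ℂ) (p q : α × β × γ) :
    (emb23sh wtA c₁ H lam * emb13sh wtB c₂ G lam * emb12sh wtC c₃ F lam) p q =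
      ∑ x, ∑ u, ∑ v, H (lam + c₁ • wtA p.1) (p.2.1, p.2.2) (u, v) *
        G (lam + c₂ • wtB u) (p.1, v) (x, q.2.2) *
        F (lam + c₃ • wtC q.2.2) (x, u) (q.1, q.2.1) := by
  simp only [mul_apply, emb12sh, emb13sh, emb23sh, Fintype.sum_prod_type, mul_ite, mul_one,
    mul_zero, ite_mul, zero_mul, Finset.sum_ite_eq, Finset.sum_ite_eq', Finset.mem_univ,
    if_true, Finset.sum_mul, Finset.sum_ite_irrel, Finset.sum_const_zero]

theorem emb12p_mul_emb13p_mul_emb23p_apply (M : Matrix (α × β) (α × β) ℂ)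
    (N : Matrix (α × γ) (α × γ) ℂ) (P : Matrix (β × γ) (β × γ) ℂ) (p q : α × β × γ) :
    (emb12p M * emb13p N * emb23p P : Matrix (α × β × γ) (α × β × γ) ℂ) p q =
      ∑ x, ∑ y, ∑ w, M (p.1, p.2.1) (x, y) * N (x, p.2.2) (q.1, w) * P (y, w) (q.2.1, q.2.2) := by
  simp only [mul_apply, emb12p, emb13p, emb23p, Fintype.sum_prod_type, mul_ite, mul_one,
    mul_zero, ite_mul, zero_mul, Finset.sum_ite_eq, Finset.sum_ite_eq', Finset.mem_univ,
    if_true, Finset.sum_mul, Finset.sum_ite_irrel, Finset.sum_const_zero]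
  exact (Finset.sum_congr rfl fun _ _ => Finset.sum_comm).trans Finset.sum_comm

theorem emb23p_mul_emb13p_mul_emb12p_apply (P : Matrix (β × γ) (β × γ) ℂ)
    (N : Matrix (α × γ) (α × γ) ℂ) (M : Matrix (α × β) (α × β) ℂ) (p q : α × β × γ) :
    (emb23p P * emb13p N * emb12p M : Matrix (α × β × γ) (α × β × γ) ℂ) p q =
      ∑ x, ∑ u, ∑ v, P (p.2.1, p.2.2) (u, v) * N (p.1, v) (x, q.2.2) * M (x, u) (q.1, q.2.1) := by
  simp only [mul_apply, emb12p, emb13p, emb23p, Fintype.sum_prod_type, mul_ite, mul_one,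
    mul_zero, ite_mul, zero_mul, Finset.sum_ite_eq, Finset.sum_ite_eq', Finset.mem_univ,
    if_true, Finset.sum_mul, Finset.sum_ite_irrel, Finset.sum_const_zero]

end Embeddings

section StarTriangle

variable {ι : Type*} [Fintype ι] [DecidableEq ι]

def projK3 (wt : ι → Fin m → ℂ) (μ₁ μ₂ μ₃ : Fin m → ℂ) : Matrix (ι × ι × ι) (ι × ι × ι) ℂ :=
  Matrix.diagonal fun p => (if wt p.1 = μ₁ then 1 else 0) * (if wt p.2.1 = μ₂ then 1 else 0) *
    (if wt p.2.2 = μ₃ then 1 else 0)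

variable {wt : ι → Fin m → ℂ} {η : ℂ} {R : ℂ → (Fin m → ℂ) → Matrix (ι × ι) (ι × ι) ℂ}

theorem face0_apply (a b c d : Fin m → ℂ) (z : ℂ) (x y u v : ι) :
    face0 wt η R a b c d z (x, y) (u, v) =
      (if wt x = c - b then 1 else 0) * (if wt y = b - a then 1 else 0) *
        R z (η • a + η • c) (x, y) (u, v) *
        ((if wt u = d - a then 1 else 0) * (if wt v = c - d then 1 else 0)) := by
  simp only [face0, face, projK, zero_add, mul_diagonal, diagonal_mul]

theorem sum_face0_product_left (hW : ∀ z lam, WeightZero2 wt wt (R z lam))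
    {a b c d e f : Fin m → ℂ} {S : Finset (Fin m → ℂ)} {z₁₂ z₁₃ z₂₃ : ℂ} {i j k i' j' k' : ι}
    (hi : wt i = d - c) (hj : wt j = c - b) (hk : wt k = b - a) (hi' : wt i' = f - a)
    (hj' : wt j' = e - f) (hk' : wt k' = d - e) (x y w : ι) (hS : b + wt x ∈ S) :
    ∑ g ∈ S, face0 wt η R b c d g z₁₂ (i, j) (x, y) * face0 wt η R a b g f z₁₃ (x, k) (i', w) *
        face0 wt η R f g d e z₂₃ (y, w) (j', k') =
      R z₁₂ (η • b + η • d) (i, j) (x, y) * R z₁₃ (η • a + η • d + (-η) • wt y) (x, k) (i', w) *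
        R z₂₃ (η • f + η • d) (y, w) (j', k') := by
  rw [Finset.sum_eq_single_of_mem _ hS fun g _ hg => ?_]
  · by_cases hy : wt y = d - (b + wt x)
    · by_cases hw : wt w = b + wt x - f
      · have hshift : η • a + η • d + (-η) • wt y = η • a + η • (b + wt x) := by
          rw [hy]; module
        rw [hshift]
        simp only [face0_apply, hi, hj, hk, hi', hj', hk', hy, hw, add_sub_cancel_left,
          if_true, mul_one, one_mul]
      · have hzero : R z₁₃ (η • a + η • d + (-η) • wt y) (x, k) (i', w) = 0 :=
          (hW _ _).apply_eq_zero fun h => hw (by simp only [hk, hi'] at h; linear_combination -h)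
        rw [hzero]
        simp [face0_apply, hw]
    · have hzero : R z₁₂ (η • b + η • d) (i, j) (x, y) = 0 :=
        (hW _ _).apply_eq_zero fun h => hy (by simp only [hi, hj] at h; linear_combination -h)
      rw [hzero]
      simp [face0_apply, hy]
  · have hx : wt x ≠ g - b := fun h => hg (by rw [h]; abel)
    simp [face0_apply, hx]

theorem sum_face0_product_right (hW : ∀ z lam, WeightZero2 wt wt (R z lam))
    {a b c d e f : Fin m → ℂ} {S : Finset (Fin m → ℂ)} {z₁₂ z₁₃ z₂₃ : ℂ} {i j k i' j' k' : ι}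
    (hi : wt i = d - c) (hj : wt j = c - b) (hk : wt k = b - a) (hi' : wt i' = f - a)
    (hj' : wt j' = e - f) (hk' : wt k' = d - e) (x u v : ι) (hS : a + wt u ∈ S) :
    ∑ g ∈ S, face0 wt η R a b c g z₂₃ (j, k) (u, v) * face0 wt η R g c d e z₁₃ (i, v) (x, k') *
        face0 wt η R a g e f z₁₂ (x, u) (i', j') =
      R z₂₃ (η • a + η • c) (j, k) (u, v) * R z₁₃ (η • a + η • d + η • wt u) (i, v) (x, k') *
        R z₁₂ (η • a + η • e) (x, u) (i', j') := by
  have h₁₃ : η • a + η • d + η • wt u = η • (a + wt u) + η • d := by module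
  rw [h₁₃, Finset.sum_eq_single_of_mem _ hS fun g _ hg => ?_]
  · by_cases hv : wt v = c - (a + wt u)
    · by_cases hx : wt x = e - (a + wt u)
      · simp only [face0_apply, hi, hj, hk, hi', hj', hk', hv, hx, add_sub_cancel_left,
          if_true, mul_one, one_mul]
      · have hzero : R z₁₂ (η • a + η • e) (x, u) (i', j') = 0 :=
          (hW _ _).apply_eq_zero fun h => hx (by simp only [hi', hj'] at h; linear_combination h)
        rw [hzero]
        simp [face0_apply, hx]
    · have hzero : R z₂₃ (η • a + η • c) (j, k) (u, v) = 0 :=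
        (hW _ _).apply_eq_zero fun h => hv (by simp only [hj, hk] at h; linear_combination -h)
      rw [hzero]
      simp [face0_apply, hv]
  · have hu : wt u ≠ g - a := fun h => hg (by rw [h]; abel)
    simp [face0_apply, hu]

theorem sum_face0_product_left_mul_projK3 (hW : ∀ z lam, WeightZero2 wt wt (R z lam))
    (a b c d e f : Fin m → ℂ) (z₁₂ z₁₃ z₂₃ : ℂ) {S : Finset (Fin m → ℂ)}
    (hS : ∀ x, b + wt x ∈ S) :
    (∑ g ∈ S, emb12p (face0 wt η R b c d g z₁₂) * emb13p (face0 wt η R a b g f z₁₃) *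
        emb23p (face0 wt η R f g d e z₂₃)) * projK3 wt (f - a) (e - f) (d - e) =
      projK3 wt (d - c) (c - b) (b - a) *
        (emb12sh wt η (R z₁₂) (η • a + η • d) * emb13sh wt (-η) (R z₁₃) (η • a + η • d) *
          emb23sh wt η (R z₂₃) (η • a + η • d)) * projK3 wt (f - a) (e - f) (d - e) := by
  ext ⟨i, j, k⟩ ⟨i', j', k'⟩
  simp only [projK3, mul_diagonal, diagonal_mul, Matrix.sum_apply,
    emb12p_mul_emb13p_mul_emb23p_apply, emb12sh_mul_emb13sh_mul_emb23sh_apply]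
  by_cases h : wt i = d - c ∧ wt j = c - b ∧ wt k = b - a ∧ wt i' = f - a ∧ wt j' = e - f ∧
      wt k' = d - e
  · obtain ⟨hi, hj, hk, hi', hj', hk'⟩ := h
    have h₁₂ : η • a + η • d + η • (b - a) = η • b + η • d := by module
    have h₂₃ : η • a + η • d + η • (f - a) = η • f + η • d := by module
    simp only [hi, hj, hk, hi', hj', hk', h₁₂, h₂₃, if_true, mul_one, one_mul]
    rw [Finset.sum_comm]
    refine Finset.sum_congr rfl fun x _ => ?_
    rw [Finset.sum_comm]
    refine Finset.sum_congr rfl fun y _ => ?_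
    rw [Finset.sum_comm]
    exact Finset.sum_congr rfl fun w _ =>
      sum_face0_product_left hW hi hj hk hi' hj' hk' x y w (hS x)
  · simp only [not_and_or] at h
    rcases h with h | h | h | h | h | h <;> simp [face0_apply, h]

theorem sum_face0_product_right_mul_projK3 (hW : ∀ z lam, WeightZero2 wt wt (R z lam))
    (a b c d e f : Fin m → ℂ) (z₁₂ z₁₃ z₂₃ : ℂ) {S : Finset (Fin m → ℂ)}
    (hS : ∀ u, a + wt u ∈ S) :
    (∑ g ∈ S, emb23p (face0 wt η R a b c g z₂₃) * emb13p (face0 wt η R g c d e z₁₃) *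
        emb12p (face0 wt η R a g e f z₁₂)) * projK3 wt (f - a) (e - f) (d - e) =
      projK3 wt (d - c) (c - b) (b - a) *
        (emb23sh wt (-η) (R z₂₃) (η • a + η • d) * emb13sh wt η (R z₁₃) (η • a + η • d) *
          emb12sh wt (-η) (R z₁₂) (η • a + η • d)) * projK3 wt (f - a) (e - f) (d - e) := by
  ext ⟨i, j, k⟩ ⟨i', j', k'⟩
  simp only [projK3, mul_diagonal, diagonal_mul, Matrix.sum_apply,
    emb23p_mul_emb13p_mul_emb12p_apply, emb23sh_mul_emb13sh_mul_emb12sh_apply]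
  by_cases h : wt i = d - c ∧ wt j = c - b ∧ wt k = b - a ∧ wt i' = f - a ∧ wt j' = e - f ∧
      wt k' = d - e
  · obtain ⟨hi, hj, hk, hi', hj', hk'⟩ := h
    have h₂₃ : η • a + η • d + (-η) • (d - c) = η • a + η • c := by module
    have h₁₂ : η • a + η • d + (-η) • (d - e) = η • a + η • e := by module
    simp only [hi, hj, hk, hi', hj', hk', h₂₃, h₁₂, if_true, mul_one, one_mul]
    rw [Finset.sum_comm]
    refine Finset.sum_congr rfl fun x _ => ?_
    rw [Finset.sum_comm]
    refine Finset.sum_congr rfl fun u _ => ?_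
    rw [Finset.sum_comm]
    exact Finset.sum_congr rfl fun v _ =>
      sum_face0_product_right hW hi hj hk hi' hj' hk' x u v (hS u)
  · simp only [not_and_or] at h
    rcases h with h | h | h | h | h | h <;> simp [face0_apply, h]

end StarTriangle

/-- the face weights of a generalized quantum R-matrix satisfy
the star-triangle relation
`Σ_g W(b,c,d,g,z₁₂)^{(12)} W(a,b,g,f,z₁₃)^{(13)} W(f,g,d,e,z₂₃)^{(23)} =
 Σ_g W(a,b,c,g,z₂₃)^{(23)} W(g,c,d,e,z₁₃)^{(13)} W(a,g,e,f,z₁₂)^{(12)}`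
on `V[f−a] ⊗ V[e−f] ⊗ V[d−e]` (the sums range over all `g` for which the
occurring weight differences are weights of `V`; all other terms vanish). -/
theorem star_triangle_of_MYBE
    {ι : Type*} [Fintype ι] [DecidableEq ι]
    (wt : ι → (Fin m → ℂ)) (η : ℂ)
    (R : ℂ → (Fin m → ℂ) → Matrix (ι × ι) (ι × ι) ℂ) (hR : IsGenR wt η R)
    (a b c d e f : Fin m → ℂ) (z₁ z₂ z₃ : ℂ) :
    (∑ g ∈ (Finset.univ.image fun i => b + wt i) ∪
        (Finset.univ.image fun i => a + wt i),
        emb12p (face0 wt η R b c d g (z₁ - z₂)) *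
          emb13p (face0 wt η R a b g f (z₁ - z₃)) *
          emb23p (face0 wt η R f g d e (z₂ - z₃))) *
      Matrix.diagonal (fun p : ι × ι × ι =>
        ((if wt p.1 = f - a then 1 else 0) *
          (if wt p.2.1 = e - f then 1 else 0) *
          (if wt p.2.2 = d - e then 1 else 0) : ℂ)) =
    (∑ g ∈ (Finset.univ.image fun i => b + wt i) ∪
        (Finset.univ.image fun i => a + wt i),
        emb23p (face0 wt η R a b c g (z₂ - z₃)) *
          emb13p (face0 wt η R g c d e (z₁ - z₃)) *
          emb12p (face0 wt η R a g e f (z₁ - z₂))) *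
      Matrix.diagonal (fun p : ι × ι × ι =>
        ((if wt p.1 = f - a then 1 else 0) *
          (if wt p.2.1 = e - f then 1 else 0) *
          (if wt p.2.2 = d - e then 1 else 0) : ℂ)) := by
  obtain ⟨hYB, -, hW⟩ := hR
  have hb : ∀ x, b + wt x ∈ (Finset.univ.image fun i => b + wt i) ∪
      (Finset.univ.image fun i => a + wt i) := fun x =>
    Finset.mem_union_left _ (Finset.mem_image_of_mem _ (Finset.mem_univ x))
  have ha : ∀ u, a + wt u ∈ (Finset.univ.image fun i => b + wt i) ∪
      (Finset.univ.image fun i => a + wt i) := fun u =>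
    Finset.mem_union_right _ (Finset.mem_image_of_mem _ (Finset.mem_univ u))
  refine (sum_face0_product_left_mul_projK3 hW a b c d e f _ _ _ hb).trans ?_
  rw [hYB]
  exact (sum_face0_product_right_mul_projK3 hW a b c d e f _ _ _ ha).symm
end
end
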